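/- Let E₀ : [0,∞) → ℝ be convex and differentiable with E₀(0) = 0, and suppose R > 0 is such that there is a unique ρ* > 0 with E₀(ρ*) = ρ*·R and E₀(ρ)/ρ strictly increasing. Then inf_{α>0} (1/α)·sup_{ρ≥0} [ρ(α+1)R − E₀(ρ)] = ρ*·R = E₀(ρ*). -/

import Mathlib

/-! At the tangent point `ρs`, the line `ρ ↦ E0 ρs + E0'(ρs) (ρ - ρs)` supports the convex `E0`,
so for the slope `(α + 1) R = E0'(ρs)` the supremum `sup_ρ [ρ (α + 1) R - E0 ρ]` is attained at
`ρs` and equals `α ρs R`; this `α` is positive because `E0 ρ / ρ` increasing forces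
`E0'(ρs) > E0 ρs / ρs = R`. For every other `α > 0`, evaluating at `ρs` alone shows that the
supremum is at least `α ρs R`. -/

open Set

namespace ConvexOn

variable {f : ℝ → ℝ} {S : Set ℝ} {x y : ℝ}

theorem add_deriv_mul_sub_le (hf : ConvexOn ℝ S f) (hx : x ∈ S) (hy : y ∈ S)
    (hd : DifferentiableAt ℝ f x) : f x + deriv f x * (y - x) ≤ f y := by
  rcases lt_trichotomy y x with hyx | rfl | hxy
  · have hs := hf.slope_le_deriv hy hx hyx hd
    rw [slope_def_field, div_le_iff₀ (sub_pos.2 hyx)] at hs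
    linarith
  · simp
  · have hs := hf.deriv_le_slope hx hy hxy hd
    rw [slope_def_field, le_div_iff₀ (sub_pos.2 hxy)] at hs
    linarith

theorem isGreatest_mul_deriv_sub (hf : ConvexOn ℝ S f) (hx : x ∈ S)
    (hd : DifferentiableAt ℝ f x) :
    IsGreatest {w | ∃ y ∈ S, w = y * deriv f x - f y} (x * deriv f x - f x) := by
  refine ⟨⟨x, hx, rfl⟩, ?_⟩
  rintro w ⟨y, hy, rfl⟩
  linarith [hf.add_deriv_mul_sub_le hx hy hd]

theorem div_lt_deriv_of_strictMonoOn_div (hf : ConvexOn ℝ (Ici 0) f)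
    (hmono : StrictMonoOn (fun x => f x / x) (Ioi 0)) (hx : 0 < x)
    (hd : DifferentiableAt ℝ f x) : f x / x < deriv f x := by
  have hx2 : 0 < x / 2 := half_pos hx
  have hslope := hf.slope_le_deriv hx2.le hx.le (half_lt_self hx) hd
  have hlt : f (x / 2) / (x / 2) < f x / x := hmono hx2 hx (half_lt_self hx)
  have hslope_eq : slope f (x / 2) x = 2 * (f x / x) - f (x / 2) / (x / 2) := by
    rw [slope_def_field]
    field_simp
    ring
  linarith

end ConvexOn

theorem uncertainty_focusing_parametric (E0 : ℝ → ℝ)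
    (hconv : ConvexOn ℝ (Set.Ici (0 : ℝ)) E0)
    (hdiff : ∀ ρ : ℝ, 0 ≤ ρ → DifferentiableAt ℝ E0 ρ)
    (R : ℝ) (hR : 0 < R)
    (hmono : StrictMonoOn (fun ρ => E0 ρ / ρ) (Set.Ioi (0 : ℝ)))
    (ρs : ℝ) (hρs : 0 < ρs) (heq : E0 ρs = ρs * R) :
    IsGLB {z : ℝ | ∃ α : ℝ, 0 < α ∧ ∃ b : ℝ,
        IsLUB {w : ℝ | ∃ ρ : ℝ, 0 ≤ ρ ∧ w = ρ * (α + 1) * R - E0 ρ} b ∧ z = b / α}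
      (ρs * R)
    ∧ ρs * R = E0 ρs := by
  have hd := hdiff ρs hρs.le
  have hRd : R < deriv E0 ρs := by
    simpa [heq, hρs.ne'] using hconv.div_lt_deriv_of_strictMonoOn_div hmono hρs hd
  obtain ⟨α, hα, hαR⟩ : ∃ α : ℝ, 0 < α ∧ (α + 1) * R = deriv E0 ρs :=
    ⟨deriv E0 ρs / R - 1, by rwa [sub_pos, one_lt_div hR], by field_simp; ring⟩
  have hsup : IsLUB {w | ∃ ρ, 0 ≤ ρ ∧ w = ρ * (α + 1) * R - E0 ρ} (α * (ρs * R)) := by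
    have h := (hconv.isGreatest_mul_deriv_sub hρs.le hd).isLUB
    simp only [← hαR, ← mul_assoc] at h
    rwa [show α * (ρs * R) = ρs * (α + 1) * R - E0 ρs by rw [heq]; ring]
  refine ⟨IsLeast.isGLB ⟨⟨α, hα, _, hsup, by field_simp⟩, ?_⟩, heq.symm⟩
  rintro _ ⟨α', hα', b, hb, rfl⟩
  have hρs_le : ρs * (α' + 1) * R - E0 ρs ≤ b := hb.1 ⟨ρs, hρs.le, rfl⟩
  rw [le_div_iff₀ hα']
  linarith
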